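/- Clock acceleration under reduction: if M ↠β N and M head-reduces in k steps to a head normal form λx1…xn.y M1 … Mm, then N head-reduces in ℓ steps, for some ℓ ≤ k, to a head normal form λx1…xn.y N1 … Nm with the same abstraction prefix, the same head variable y, the same number m of arguments, and Mi ↠β Ni for each i = 1, …, m. -/

import Mathlib

/-!
A β-step `M → N` out of a term with head step `M →h M₁` is either that head step, or it
commutes with it: `N →h N₁` for some `N₁` with `M₁ ↠β N₁`. In a head normal form
`λx⃗.y M⃗` every step takes place inside an argument. So, by induction on the number `k`
of head steps and, inside it, on the length of `M ↠β N`, each step of `M ↠β N` leaves the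
number of head steps to the hnf at most unchanged, and the arguments of the hnf can only
reduce.
-/

/-- Untyped λ-terms in de Bruijn notation. -/
inductive Lam : Type
  | var : Nat → Lam
  | app : Lam → Lam → Lam
  | lam : Lam → Lam
  deriving DecidableEq

namespace Lam

/-- Lift (shift) free variables ≥ `d` by one. -/
def lift (d : Nat) : Lam → Lam
  | var n => if n < d then var n else var (n + 1)
  | app s t => app (lift d s) (lift d t)
  | lam t => lam (lift (d + 1) t)

/-- Capture-avoiding substitution of `u` for the variable with index `k`. -/
def subst (k : Nat) (u : Lam) : Lam → Lam
  | var n => if n = k then u else if k < n then var (n - 1) else var n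
  | app s t => app (subst k u s) (subst k u t)
  | lam t => lam (subst (k + 1) (lift 0 u) t)

/-- One-step β-reduction `→β` (compatible closure of the β-rule). -/
inductive Step : Lam → Lam → Prop
  | beta (t u : Lam) : Step (app (lam t) u) (subst 0 u t)
  | appL {s s' : Lam} (t : Lam) : Step s s' → Step (app s t) (app s' t)
  | appR (s : Lam) {t t' : Lam} : Step t t' → Step (app s t) (app s t')
  | lam {t t' : Lam} : Step t t' → Step (lam t) (lam t')

/-- Many-step β-reduction `↠β`. -/
def Red : Lam → Lam → Prop := Relation.ReflTransGen Step

/-- β-convertibility `=β`. -/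
def Conv : Lam → Lam → Prop := Relation.EqvGen Step

/-- `Y` is a fixed point combinator: `Y x =β x (Y x)` for a fresh variable `x`. -/
def isFPC (Y : Lam) : Prop :=
  Conv (app (lift 0 Y) (var 0)) (app (var 0) (app (lift 0 Y) (var 0)))

/-- `M P^n`: `M` applied to `n` copies of `P`. -/
def appIter (M P : Lam) : Nat → Lam
  | 0 => M
  | n + 1 => appIter (app M P) P n

/-- `I = λx.x` -/
def K_I : Lam := lam (var 0)

/-- `S = λxyz.xz(yz)` -/
def K_S : Lam := lam (lam (lam (app (app (var 2) (var 0)) (app (var 1) (var 0)))))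

/-- `B = λxyz.x(yz)` -/
def K_B : Lam := lam (lam (lam (app (var 2) (app (var 1) (var 0)))))

/-- `δ = λab.b(ab)` -/
def K_delta : Lam := lam (lam (app (var 0) (app (var 1) (var 0))))

/-- `ω_f = λx.f(xx)` (with `f` the variable bound just outside). -/
def K_omega : Lam := lam (app (var 1) (app (var 0) (var 0)))

/-- Curry's fpc `Y0 = λf.ω_f ω_f`. -/
def Y0 : Lam := lam (app K_omega K_omega)

/-- `η = λxf.f(xxf)` -/
def K_eta : Lam := lam (lam (app (var 0) (app (app (var 1) (var 1)) (var 0))))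

/-- Turing's fpc `Y1 = ηη`. -/
def Y1 : Lam := app K_eta K_eta

/-- One head reduction step: contraction of the head redex. -/
inductive Head : Lam → Lam → Prop
  | beta (t u : Lam) : Head (app (lam t) u) (subst 0 u t)
  | app {s s' : Lam} (t : Lam) : (∀ u, s ≠ lam u) → Head s s' → Head (app s t) (app s' t)
  | lam {t t' : Lam} : Head t t' → Head (lam t) (lam t')

/-- Exactly `k` head reduction steps. -/
def HeadN : Nat → Lam → Lam → Prop
  | 0, s, t => s = t
  | k + 1, s, t => ∃ u, Head s u ∧ HeadN k u t

/-- Exactly `k` β-reduction steps. -/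
def StepN : Nat → Lam → Lam → Prop
  | 0, s, t => s = t
  | k + 1, s, t => ∃ u, Step s u ∧ StepN k u t

/-- `n`-fold λ-abstraction. -/
def lamN : Nat → Lam → Lam
  | 0, t => t
  | n + 1, t => lam (lamN n t)

/-- `M M1 ⋯ Mm`: `M` applied to a list of arguments. -/
def appList (M : Lam) (Ms : List Lam) : Lam := Ms.foldl app M

theorem lift_lift (t : Lam) {i j : ℕ} (h : i ≤ j) :
    lift i (lift j t) = lift (j + 1) (lift i t) := by
  induction t generalizing i j with
  | var n => simp only [lift]; grind [lift]
  | app s t ihs iht => simp only [lift, ihs h, iht h]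
  | lam t ih => simp only [lift, ih (Nat.succ_le_succ h)]

theorem lift_subst_of_le (t u : Lam) {k d : ℕ} (h : k ≤ d) :
    lift d (subst k u t) = subst k (lift d u) (lift (d + 1) t) := by
  induction t generalizing k d u with
  | var n => simp only [subst, lift]; grind [lift, subst]
  | app s t ihs iht => simp only [lift, subst, ihs u h, iht u h]
  | lam t ih =>
    simp only [lift, subst, ih (lift 0 u) (Nat.succ_le_succ h), lift_lift u (Nat.zero_le d)]

theorem lift_subst_of_ge (t u : Lam) {k d : ℕ} (h : d ≤ k) :
    lift d (subst k u t) = subst (k + 1) (lift d u) (lift d t) := by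
  induction t generalizing k d u with
  | var n => simp only [subst, lift]; grind [lift, subst]
  | app s t ihs iht => simp only [lift, subst, ihs u h, iht u h]
  | lam t ih =>
    simp only [lift, subst, ih (lift 0 u) (Nat.succ_le_succ h), lift_lift u (Nat.zero_le d)]

theorem subst_lift (t v : Lam) (k : ℕ) : subst k v (lift k t) = t := by
  induction t generalizing k v with
  | var n => simp only [lift]; grind [subst]
  | app s t ihs iht => simp only [lift, subst, ihs, iht]
  | lam t ih => simp only [lift, subst, ih]

theorem subst_subst (t u w : Lam) {j k : ℕ} (h : j ≤ k) :
    subst k u (subst j w t) = subst j (subst k u w) (subst (k + 1) (lift j u) t) := by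
  induction t generalizing j k u w with
  | var n => simp only [subst]; grind [subst, subst_lift]
  | app s t ihs iht => simp only [subst, ihs u w h, iht u w h]
  | lam t ih =>
    simp only [subst, ih (lift 0 u) (lift 0 w) (Nat.succ_le_succ h),
      lift_subst_of_ge w u (Nat.zero_le k), lift_lift u (Nat.zero_le j)]

theorem Step.lift {t t' : Lam} (h : Step t t') (d : ℕ) : Step (Lam.lift d t) (Lam.lift d t') := by
  induction h generalizing d with
  | beta t u =>
    rw [lift_subst_of_le t u (Nat.zero_le d)]
    exact Step.beta _ _
  | appL t _ ih => exact Step.appL _ (ih d)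
  | appR s _ ih => exact Step.appR _ (ih d)
  | lam _ ih => exact Step.lam (ih (d + 1))

theorem Step.subst {t t' : Lam} (h : Step t t') (k : ℕ) (u : Lam) :
    Step (Lam.subst k u t) (Lam.subst k u t') := by
  induction h generalizing k u with
  | beta a b =>
    rw [subst_subst a u b (Nat.zero_le k)]
    exact Step.beta _ _
  | appL t _ ih => exact Step.appL _ (ih k u)
  | appR s _ ih => exact Step.appR _ (ih k u)
  | lam _ ih => exact Step.lam (ih (k + 1) (Lam.lift 0 u))

theorem Red.appL {s s' : Lam} (t : Lam) (h : Red s s') : Red (app s t) (app s' t) :=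
  Relation.ReflTransGen.lift (app · t) (fun _ _ => Step.appL t) _ _ h

theorem Red.appR (s : Lam) {t t' : Lam} (h : Red t t') : Red (app s t) (app s t') :=
  Relation.ReflTransGen.lift (app s) (fun _ _ => Step.appR s) _ _ h

theorem Red.lam {t t' : Lam} (h : Red t t') : Red (lam t) (lam t') :=
  Relation.ReflTransGen.lift Lam.lam (fun _ _ => Step.lam) _ _ h

theorem Red.subst_of_step (t : Lam) (k : ℕ) {u u' : Lam} (h : Step u u') :
    Red (subst k u t) (subst k u' t) := by
  induction t generalizing k u u' with
  | var n =>
    simp only [subst]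
    split_ifs
    exacts [.single h, .refl, .refl]
  | app s t ihs iht => exact (Red.appL _ (ihs k h)).trans (Red.appR _ (iht k h))
  | lam t ih => exact Red.lam (ih (k + 1) (h.lift 0))

theorem Head.eq_of_step_lam {s s' s₂ : Lam} (hs : ∀ u, s ≠ Lam.lam u) (hh : Head s s')
    (hst : Step s s₂) (hl : ∃ v, s₂ = Lam.lam v) : s₂ = s' := by
  obtain ⟨v, hv⟩ := hl
  cases hh with
  | beta => cases hst <;> first | rfl | cases hv
  | app _ hne =>
    cases hst with
    | beta => exact absurd rfl (hne _)
    | _ => cases hv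
  | lam => exact absurd rfl (hs _)

theorem Head.step_or_commute {M M₁ : Lam} (hh : Head M M₁) {N : Lam} (hs : Step M N) :
    N = M₁ ∨ ∃ N₁, Head N N₁ ∧ Red M₁ N₁ := by
  induction hh generalizing N with
  | beta t u =>
    cases hs with
    | beta => exact .inl rfl
    | appL _ h =>
      cases h with
      | lam h => exact .inr ⟨_, Head.beta _ u, .single (h.subst 0 u)⟩
    | appR _ h => exact .inr ⟨_, Head.beta t _, Red.subst_of_step t 0 h⟩
  | app t hne hh' ih =>
    cases hs with
    | beta => exact absurd rfl (hne _)
    | @appL _ s₂ _ h =>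
      by_cases hl : ∃ v, s₂ = Lam.lam v
      · exact .inl (by rw [hh'.eq_of_step_lam hne h hl])
      · push Not at hl
        rcases ih h with rfl | ⟨s₃, hh₃, hr₃⟩
        · exact .inl rfl
        · exact .inr ⟨_, Head.app t hl hh₃, hr₃.appL t⟩
    | appR _ h => exact .inr ⟨_, Head.app _ hne hh', Red.appR _ (.single h)⟩
  | lam _ ih =>
    cases hs with
    | lam h =>
      rcases ih h with rfl | ⟨t₃, hh₃, hr₃⟩
      · exact .inl rfl
      · exact .inr ⟨_, Head.lam hh₃, hr₃.lam⟩

theorem _root_.List.Forall₂.trans {α : Type*} {R : α → α → Prop}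
    (trans : ∀ {a b c}, R a b → R b c → R a c) {as bs cs : List α}
    (h₁ : List.Forall₂ R as bs) (h₂ : List.Forall₂ R bs cs) : List.Forall₂ R as cs := by
  induction h₁ generalizing cs with
  | nil => exact h₂
  | cons h _ ih =>
    cases h₂ with
    | cons h' h₂ => exact .cons (trans h h') (ih h₂)

theorem forall₂_red_refl (Ms : List Lam) : List.Forall₂ Red Ms Ms :=
  List.forall₂_same.2 fun _ _ => .refl

theorem appList_ne_lam {M : Lam} (hM : ∀ u, M ≠ lam u) (Ms : List Lam) (u : Lam) :
    appList M Ms ≠ lam u := by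
  induction Ms generalizing M with
  | nil => exact hM u
  | cons a Ms ih => exact ih (fun _ => Lam.noConfusion)

theorem appList_append_singleton (M a : Lam) (Ms : List Lam) :
    appList M (Ms ++ [a]) = app (appList M Ms) a := by
  simp [appList]

theorem Step.appList_var {y : ℕ} {Ms : List Lam} {N : Lam} (h : Step (appList (var y) Ms) N) :
    ∃ Ns, N = appList (var y) Ns ∧ List.Forall₂ Red Ms Ns := by
  induction Ms using List.reverseRecOn generalizing N with
  | nil => cases h
  | append_singleton Ms a ih =>
    rw [appList_append_singleton] at h
    generalize hP : appList (var y) Ms = P at h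
    cases h with
    | beta t => exact absurd hP (appList_ne_lam (fun _ => Lam.noConfusion) Ms t)
    | appL _ h =>
      subst hP
      obtain ⟨Ns, rfl, hNs⟩ := ih h
      exact ⟨Ns ++ [a], (appList_append_singleton _ _ _).symm,
        List.rel_append hNs (.cons .refl .nil)⟩
    | appR _ h =>
      subst hP
      exact ⟨_ ++ [_], (appList_append_singleton _ _ _).symm,
        List.rel_append (forall₂_red_refl Ms) (.cons (.single h) .nil)⟩

theorem Step.lamN_appList_var {n y : ℕ} {Ms : List Lam} {N : Lam}
    (h : Step (lamN n (appList (var y) Ms)) N) :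
    ∃ Ns, N = lamN n (appList (var y) Ns) ∧ List.Forall₂ Red Ms Ns := by
  induction n generalizing N with
  | zero => exact h.appList_var
  | succ n ih =>
    cases h with
    | lam h =>
      obtain ⟨Ns, rfl, hNs⟩ := ih h
      exact ⟨Ns, rfl, hNs⟩

def HeadHnfWithin (k : ℕ) (N : Lam) (n y : ℕ) (Ms : List Lam) : Prop :=
  ∃ l ≤ k, ∃ Ns, HeadN l N (lamN n (appList (var y) Ns)) ∧ List.Forall₂ Red Ms Ns

namespace HeadHnfWithin

variable {k : ℕ} {M N : Lam} {n y : ℕ} {Ms : List Lam}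

theorem of_headN (h : HeadN k N (lamN n (appList (var y) Ms))) : HeadHnfWithin k N n y Ms :=
  ⟨k, le_rfl, Ms, h, forall₂_red_refl Ms⟩

theorem mono {k' : ℕ} (h : HeadHnfWithin k N n y Ms) (hk : k ≤ k') : HeadHnfWithin k' N n y Ms :=
  let ⟨l, hl, Ns, hN, hNs⟩ := h
  ⟨l, hl.trans hk, Ns, hN, hNs⟩

theorem head {N₁ : Lam} (hN : Head N N₁) (h : HeadHnfWithin k N₁ n y Ms) :
    HeadHnfWithin (k + 1) N n y Ms :=
  let ⟨l, hl, Ns, hN₁, hNs⟩ := h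
  ⟨l + 1, Nat.succ_le_succ hl, Ns, ⟨N₁, hN, hN₁⟩, hNs⟩

theorem of_forall₂_red {Ms' : List Lam} (hMs : List.Forall₂ Red Ms Ms')
    (h : HeadHnfWithin k N n y Ms') : HeadHnfWithin k N n y Ms :=
  let ⟨l, hl, Ns, hN, hNs⟩ := h
  ⟨l, hl, Ns, hN, hMs.trans (·.trans ·) hNs⟩

theorem of_step
    (ih : ∀ i < k, ∀ M N Ms, Red M N → HeadN i M (lamN n (appList (var y) Ms)) →
      HeadHnfWithin i N n y Ms)
    (hs : Step M N) (hM : HeadN k M (lamN n (appList (var y) Ms))) :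
    HeadHnfWithin k N n y Ms := by
  cases k with
  | zero =>
    obtain rfl : M = _ := hM
    obtain ⟨Ns, rfl, hNs⟩ := hs.lamN_appList_var
    exact ⟨0, le_rfl, Ns, rfl, hNs⟩
  | succ k =>
    obtain ⟨M₁, hM₁, hM₁k⟩ := hM
    rcases hM₁.step_or_commute hs with rfl | ⟨N₁, hN₁, hred⟩
    · exact (of_headN hM₁k).mono k.le_succ
    · exact (ih k k.lt_succ_self M₁ N₁ Ms hred hM₁k).head hN₁

theorem of_red (hr : Red M N) (hM : HeadN k M (lamN n (appList (var y) Ms))) :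
    HeadHnfWithin k N n y Ms := by
  induction k using Nat.strong_induction_on generalizing M N Ms with
  | _ k ihk =>
    -- a step may speed the clock up, so the induction on `hr` must allow any budget `j ≤ k`
    suffices ∀ j ≤ k, ∀ Ms, HeadN j M (lamN n (appList (var y) Ms)) → HeadHnfWithin j N n y Ms
      from this k le_rfl Ms hM
    clear hM
    induction hr using Relation.ReflTransGen.head_induction_on with
    | refl => exact fun j _ Ms h => of_headN h
    | head hs _ ih =>
      intro j hj Ms hM
      obtain ⟨l, hl, Ms', hM', hMs⟩ :=
        of_step (fun i hi _ _ _ => ihk i (hi.trans_le hj)) hs hM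
      exact ((ih l (hl.trans hj) Ms' hM').mono hl).of_forall₂_red hMs

end HeadHnfWithin

/-- Clock acceleration under reduction: if `M ↠β N` and `M` head-reduces in `k` steps
to an hnf `λx1…xn.y M1 … Mm`, then `N` head-reduces in `ℓ ≤ k` steps to an hnf
`λx1…xn.y N1 … Nm` with the same prefix, head variable and number of arguments,
and `Mi ↠β Ni` for each `i`. -/
theorem clock_acceleration :
    ∀ (M N : Lam) (k n y : Nat) (Ms : List Lam),
      Red M N →
      HeadN k M (lamN n (appList (var y) Ms)) →
      ∃ l ≤ k, ∃ Ns : List Lam,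
        HeadN l N (lamN n (appList (var y) Ns)) ∧ List.Forall₂ Red Ms Ns :=
  fun _ _ _ _ _ _ hr hM => HeadHnfWithin.of_red hr hM

end Lam
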